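/- Let I be an instance of 3DM with elements A ∪ B ∪ C = {e_1,…,e_{3n̂}} and family S = {S_1,…,S_{3n̂}}. Construct the capacitated house allocation instance I' as follows: for each element e_i there is a house e_i of capacity 1 and two applicants e_i^1, e_i^2 each with preference list consisting of e_i only; for each set S_j = {e_{j_1}, e_{j_2}, e_{j_3}} (j_1 < j_2 < j_3) there are houses t_j of capacity 4, p_j of capacity 1, q_j of capacity 1, and applicants s_j^1, s_j^2, s_j^3, s_j^4, a_j, p_j', q_j^1, q_j^2, q_j^3 with preference lists s_j^ℓ : e_{j_ℓ} ≻ p_j ≻ t_j for ℓ = 1,2,3; s_j^4 : e_{j_3} ≻ p_j ≻ t_j; a_j : q_j ≻ p_j ≻ x; q_j^1, q_j^2, q_j^3 : q_j only; p_j' : p_j only; and there is a collector house x of capacity 2n̂ − 2. Then there is a capacity increase vector r ≥ 0 with |r|_∞ ≤ 2 such that the instance with capacities q + r admits a perfect popular matching if and only if I admits an exact 3-cover. -/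

import Mathlib

noncomputable section

open Finset

attribute [local instance] Classical.propDecidable

/-- `Better l x y` means the (optional) house `x` is strictly preferred to the (optional)
house `y` according to the strict preference list `l` (earlier in the list = more
preferred); being matched to any acceptable house is preferred to being unmatched. -/
def Better {H : Type*} (l : List H) : Option H → Option H → Prop
  | some h, some h' => h ∈ l ∧ l.idxOf h < l.idxOf h'
  | some h, none => h ∈ l
  | none, _ => False

/-- A capacitated house allocation instance: each applicant `a` has a strict preference
list `pref a` over her acceptable houses (most preferred first, acceptable = on the list),
and each house `h` has a capacity `cap h`. -/
structure HA (A H : Type*) where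
  pref : A → List H
  cap : H → ℕ

namespace HA

variable {A H : Type*} [Fintype A]

/-- A matching assigns to each applicant at most one acceptable house,
respecting the houses' capacities. -/
def IsMatching (I : HA A H) (M : A → Option H) : Prop :=
  (∀ a h, M a = some h → h ∈ I.pref a) ∧
  ∀ h, (univ.filter fun a => M a = some h).card ≤ I.cap h

/-- A matching is perfect if every applicant is matched. -/
def Perfect (M : A → Option H) : Prop := ∀ a, (M a).isSome

/-- `M'` dominates `M` if strictly more applicants prefer `M'` to `M` than
prefer `M` to `M'`. -/
def Dominates (I : HA A H) (M' M : A → Option H) : Prop :=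
  (univ.filter fun a => Better (I.pref a) (M a) (M' a)).card <
    (univ.filter fun a => Better (I.pref a) (M' a) (M a)).card

/-- A matching is popular if no matching dominates it. -/
def Popular (I : HA A H) (M : A → Option H) : Prop :=
  I.IsMatching M ∧ ∀ M', I.IsMatching M' → ¬ I.Dominates M' M

/-- `M'` Pareto-dominates `M` if every applicant is at least as well off in `M'`,
and some applicant is strictly better off. -/
def ParetoDominates (I : HA A H) (M' M : A → Option H) : Prop :=
  (∀ a, M' a = M a ∨ Better (I.pref a) (M' a) (M a)) ∧
  ∃ a, Better (I.pref a) (M' a) (M a)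

/-- A matching is Pareto-optimal if no matching Pareto-dominates it. -/
def ParetoOptimal (I : HA A H) (M : A → Option H) : Prop :=
  I.IsMatching M ∧ ∀ M', I.IsMatching M' → ¬ I.ParetoDominates M' M

/-- The cardinality of a matching: the number of matched applicants. -/
def size (M : A → Option H) : ℕ := (univ.filter fun a => (M a).isSome).card

/-- `f(a)`: the most preferred acceptable house of `a` (if any). -/
def fOpt (I : HA A H) (a : A) : Option H := (I.pref a).head?

/-- The admirers of a house `h`: the applicants whose most preferred house is `h`. -/
def admirers (I : HA A H) (h : H) : Finset A := univ.filter fun a => I.fOpt a = some h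

/-- `s(a)`: equals `f(a)` if `f(a)` has at most `cap (f a)` admirers; otherwise the
most preferred acceptable house of `a` having strictly fewer admirers than its
capacity; `none` if no such house exists. -/
def sOpt (I : HA A H) (a : A) : Option H :=
  match (I.pref a).head? with
  | none => none
  | some h =>
    if (I.admirers h).card ≤ I.cap h then some h
    else (I.pref a).find? fun h' => decide ((I.admirers h').card < I.cap h')

/-- `(a, h)` is an edge of the first/second-choice multigraph `G'`. -/
def InG' (I : HA A H) (a : A) (h : H) : Prop := I.fOpt a = some h ∨ I.sOpt a = some h

/-- The set of applicants matched to house `h` in `M`. -/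
def matchedTo (M : A → Option H) (h : H) : Finset A := univ.filter fun a => M a = some h

/-- An admissible matching: every edge lies in `G'`; every house having at least as many
admirers as its capacity is saturated by admirers only; and every house having at most
as many admirers as its capacity has all its admirers matched to it. -/
def Admissible (I : HA A H) (M : A → Option H) : Prop :=
  I.IsMatching M ∧
  (∀ a h, M a = some h → I.InG' a h) ∧
  (∀ h, I.cap h ≤ (I.admirers h).card →
      (matchedTo M h).card = I.cap h ∧ ∀ a ∈ matchedTo M h, I.fOpt a = some h) ∧
  (∀ h, (I.admirers h).card ≤ I.cap h → ∀ a ∈ I.admirers h, M a = some h)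

end HA

/-- An instance of the special variant of 3DM used in the reductions: the elements are
`e_0, …, e_{3n̂-1} : Fin (3 * n̂)`, where the first `n̂` elements form the class `A`, the
next `n̂` form `B` and the last `n̂` form `C`; `S j = (j₁, j₂, j₃)` (with `j₁ < j₂ < j₃`,
one element from each class) is the `j`-th 3-set of the family, and every element lies
in exactly 3 members of the family. -/
structure ThreeDMFlat (n : ℕ) where
  S : Fin (3 * n) → Fin (3 * n) × Fin (3 * n) × Fin (3 * n)
  partA : ∀ j, ((S j).1 : ℕ) < n
  partB : ∀ j, n ≤ ((S j).2.1 : ℕ) ∧ ((S j).2.1 : ℕ) < 2 * n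
  partC : ∀ j, 2 * n ≤ ((S j).2.2 : ℕ)
  reg : ∀ i, (Finset.univ.filter fun j =>
    (S j).1 = i ∨ (S j).2.1 = i ∨ (S j).2.2 = i).card = 3

/-- Membership of element `i` in the set `S j`. -/
def ThreeDMFlat.Mem {n : ℕ} (D : ThreeDMFlat n) (i j : Fin (3 * n)) : Prop :=
  (D.S j).1 = i ∨ (D.S j).2.1 = i ∨ (D.S j).2.2 = i

/-- `J` is an exact 3-cover: every element lies in exactly one member of `J`. -/
def ThreeDMFlat.ExactCover {n : ℕ} (D : ThreeDMFlat n) (J : Finset (Fin (3 * n))) : Prop :=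
  ∀ i, (J.filter fun j => D.Mem i j).card = 1

/-- Houses of the reduction for STATEMENT 15: element houses `e_i`, houses `t_j`, `p_j`,
`q_j` for each set `S_j`, and the collector house `x`. -/
abbrev House15 (n : ℕ) :=
  Fin (3 * n) ⊕ (Fin (3 * n) ⊕ (Fin (3 * n) ⊕ (Fin (3 * n) ⊕ Unit)))

/-- Applicants of the reduction for STATEMENT 15: `e_i^1, e_i^2`, `s_j^ℓ` (ℓ = 1,2,3,4),
`a_j`, `p_j'` and `q_j^1, q_j^2, q_j^3`. -/
abbrev Appl15 (n : ℕ) :=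
  (Fin (3 * n) × Fin 2) ⊕
    ((Fin (3 * n) × Fin 4) ⊕ (Fin (3 * n) ⊕ (Fin (3 * n) ⊕ (Fin (3 * n) × Fin 3))))

def he15 {n : ℕ} (i : Fin (3 * n)) : House15 n := Sum.inl i
def ht15 {n : ℕ} (j : Fin (3 * n)) : House15 n := Sum.inr (Sum.inl j)
def hp15 {n : ℕ} (j : Fin (3 * n)) : House15 n := Sum.inr (Sum.inr (Sum.inl j))
def hq15 {n : ℕ} (j : Fin (3 * n)) : House15 n := Sum.inr (Sum.inr (Sum.inr (Sum.inl j)))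
def hx15 {n : ℕ} : House15 n := Sum.inr (Sum.inr (Sum.inr (Sum.inr ())))

/-- The element of `S_j` acceptable to `s_j^ℓ`: `e_{j_1}, e_{j_2}, e_{j_3}` for
`ℓ = 0, 1, 2` and `e_{j_3}` for `ℓ = 3`. -/
def elem15 {n : ℕ} (D : ThreeDMFlat n) (j : Fin (3 * n)) (ℓ : Fin 4) : Fin (3 * n) :=
  if ℓ = 0 then (D.S j).1 else if ℓ = 1 then (D.S j).2.1 else (D.S j).2.2

/-- Initial capacities: `q[e_i] = 1`, `q[t_j] = 4`, `q[p_j] = 1`, `q[q_j] = 1`,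
`q[x] = 2n̂ - 2`. -/
def cap15 {n : ℕ} : House15 n → ℕ
  | Sum.inl _ => 1
  | Sum.inr (Sum.inl _) => 4
  | Sum.inr (Sum.inr (Sum.inl _)) => 1
  | Sum.inr (Sum.inr (Sum.inr (Sum.inl _))) => 1
  | Sum.inr (Sum.inr (Sum.inr (Sum.inr _))) => 2 * n - 2

/-- The instance `I'` of STATEMENT 15 (with capacity vector `c`):
`s_j^ℓ : e_{j_ℓ} ≻ p_j ≻ t_j` (ℓ = 1,2,3), `s_j^4 : e_{j_3} ≻ p_j ≻ t_j`;
`a_j : q_j ≻ p_j ≻ x`; `q_j^1, q_j^2, q_j^3 : q_j`; `p_j' : p_j`; `e_i^1, e_i^2 : e_i`. -/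
def inst15 {n : ℕ} (D : ThreeDMFlat n) (c : House15 n → ℕ) : HA (Appl15 n) (House15 n) where
  pref := fun a =>
    match a with
    | Sum.inl (i, _) => [he15 i]
    | Sum.inr (Sum.inl (j, ℓ)) => [he15 (elem15 D j ℓ), hp15 j, ht15 j]
    | Sum.inr (Sum.inr (Sum.inl j)) => [hq15 j, hp15 j, hx15]
    | Sum.inr (Sum.inr (Sum.inr (Sum.inl j))) => [hp15 j]
    | Sum.inr (Sum.inr (Sum.inr (Sum.inr (j, _)))) => [hq15 j]
  cap := c

/-!
Given an exact cover `J`, raise every capacity by 2 except those of the `t_j` and of the `p_j`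
with `j ∉ J`. For `j ∈ J` seat `s_j^1, s_j^2, s_j^3` at their elements and `s_j^4, a_j` at `p_j`;
for `j ∉ J` seat the `s_j^ℓ` at `t_j` and `a_j` at `x`; everybody else gets their only house.
This perfect matching is popular because every house that some applicant prefers to her own is
filled to capacity by applicants for whom it is the first choice.

Conversely, in a perfect popular matching every `a_j` sits at `p_j` or at `x`, and since `x` has
capacity at most `2n̂`, `a_j` sits at `p_j` for at least `n̂` indices `j`. For such `j` no `s_j^ℓ`
sits at `t_j` (otherwise an exchange would win a vote) and at most one sits at `p_j`, so the
`s_j^ℓ` occupy all three elements of `S_j`. As each `e_i` has room for only one `s`-applicant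
besides `e_i^1, e_i^2`, these `n̂` sets cover every element at most once, hence exactly once.
-/

namespace Better

variable {H : Type*} {l : List H}

lemma irrefl (o : Option H) : ¬ Better l o o := by
  cases o with
  | none => exact id
  | some h => exact fun hb => lt_irrefl _ hb.2

lemma asymm {o o' : Option H} (hb : Better l o o') : ¬ Better l o' o := by
  match o, o', hb with
  | some _, some _, hb => exact fun hb' => lt_asymm hb.2 hb'.2
  | some _, none, _ => exact id

lemma of_head?_eq {h : H} {o : Option H} (hl : l.head? = some h) (ho : o ≠ some h) :
    Better l (some h) o := by
  obtain ⟨t, rfl⟩ : ∃ t, l = h :: t := by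
    cases l with
    | nil => simp at hl
    | cons x t => exact ⟨t, by simp_all⟩
  cases o with
  | none => simp [Better]
  | some h' =>
    have : h ≠ h' := fun e => ho (e ▸ rfl)
    simp [Better, this]

end Better

namespace HA

variable {A H : Type*} [Fintype A] {I : HA A H} {M M' : A → Option H}

@[simp]
lemma mem_matchedTo {h : H} {a : A} : a ∈ matchedTo M h ↔ M a = some h := by
  simp [matchedTo]

lemma isMatching_iff : I.IsMatching M ↔
    (∀ a h, M a = some h → h ∈ I.pref a) ∧ ∀ h, #(matchedTo M h) ≤ I.cap h := Iff.rfl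

lemma IsMatching.card_le_cap (hM : I.IsMatching M) {h : H} {s : Finset A}
    (hs : ∀ a ∈ s, M a = some h) : #s ≤ I.cap h :=
  (card_le_card fun a ha => mem_matchedTo.2 (hs a ha)).trans (hM.2 h)

lemma IsMatching.exists_mem_pref (hM : I.IsMatching M) {a : A} (ha : (M a).isSome) :
    ∃ h ∈ I.pref a, M a = some h := by
  obtain ⟨h, hh⟩ := Option.isSome_iff_exists.1 ha
  exact ⟨h, hM.1 a h hh, hh⟩

lemma IsMatching.eq_some_of_pref_eq_singleton (hM : I.IsMatching M) {a : A} {h : H}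
    (ha : (M a).isSome) (hpref : I.pref a = [h]) : M a = some h := by
  obtain ⟨h', hh', hMa⟩ := hM.exists_mem_pref ha
  rw [hpref, List.mem_singleton] at hh'
  rwa [← hh']

lemma IsMatching.update_reassign (hM : I.IsMatching M) {a b : A} {h : H}
    (ha : M a = some h) (hb : h ∈ I.pref b) :
    I.IsMatching (Function.update (Function.update M a none) b (some h)) := by
  set M₁ := Function.update (Function.update M a none) b (some h)
  have hM₁ : ∀ c h', M₁ c = some h' → (c = b ∧ h' = h) ∨ (c ≠ a ∧ M c = some h') := by
    intro c h' hc
    by_cases hcb : c = b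
    · subst hcb; simp_all [M₁]
    · by_cases hca : c = a
      · subst hca; simp_all [M₁]
      · simp_all [M₁]
  refine ⟨fun c h' hc => ?_, fun h' => ?_⟩
  · rcases hM₁ c h' hc with ⟨rfl, rfl⟩ | ⟨-, hc⟩
    exacts [hb, hM.1 c h' hc]
  · by_cases hh' : h' = h
    · subst hh'
      calc #(matchedTo M₁ h') ≤ #(insert b ((matchedTo M h').erase a)) :=
            card_le_card fun c hc => by
              rcases hM₁ c h' (mem_matchedTo.1 hc) with ⟨rfl, -⟩ | ⟨hca, hc⟩ <;> simp_all
        _ ≤ #((matchedTo M h').erase a) + 1 := card_insert_le _ _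
        _ = #(matchedTo M h') := card_erase_add_one (mem_matchedTo.2 ha)
        _ ≤ I.cap h' := hM.2 h'
    · exact hM.card_le_cap fun c hc => by
        rcases hM₁ c h' (mem_matchedTo.1 hc) with ⟨-, rfl⟩ | ⟨-, hc⟩
        exacts [absurd rfl hh', hc]

lemma dominates_of_two_improvers {a b c : A} (hab : a ≠ b)
    (ha : Better (I.pref a) (M' a) (M a)) (hb : Better (I.pref b) (M' b) (M b))
    (hM' : ∀ d, d ≠ a → d ≠ b → d ≠ c → M' d = M d) : I.Dominates M' M := by
  have worse : univ.filter (fun d => Better (I.pref d) (M d) (M' d)) ⊆ {c} := by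
    intro d hd
    rw [mem_filter] at hd
    by_contra hdc
    rw [mem_singleton] at hdc
    by_cases hda : d = a
    · subst hda; exact ha.asymm hd.2
    by_cases hdb : d = b
    · subst hdb; exact hb.asymm hd.2
    exact Better.irrefl _ (hM' d hda hdb hdc ▸ hd.2)
  have better : {a, b} ⊆ univ.filter fun d => Better (I.pref d) (M' d) (M d) := by
    simp [insert_subset_iff, ha, hb]
  calc _ ≤ 1 := (card_le_card worse).trans (card_singleton c).le
    _ < #({a, b} : Finset A) := by rw [card_pair hab]; omega
    _ ≤ _ := card_le_card better

def SaturatedByAdmirers (I : HA A H) (M : A → Option H) (h : H) : Prop :=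
  #(matchedTo M h) = I.cap h ∧ ∀ a ∈ matchedTo M h, I.fOpt a = some h

/-- Applicants who reach `h` by improving in `M'` push out at least as many first-choice
applicants of `h`, each of whom is then worse off. -/
lemma card_better_at_le_card_worse_at (hM' : I.IsMatching M')
    (hsat : ∀ a h, Better (I.pref a) (some h) (M a) → I.SaturatedByAdmirers M h)
    (o : Option H) :
    #(univ.filter fun a => Better (I.pref a) (M' a) (M a) ∧ M' a = o) ≤
      #(univ.filter fun a => Better (I.pref a) (M a) (M' a) ∧ M a = o) := by
  rcases o with _ | h
  · rw [card_eq_zero.2 (filter_eq_empty_iff.2 fun a _ ⟨hba, ha⟩ => by rwa [ha] at hba)]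
    exact Nat.zero_le _
  set X := univ.filter fun a => Better (I.pref a) (M' a) (M a) ∧ M' a = some h
  rcases X.eq_empty_or_nonempty with hX | ⟨a, ha⟩
  · simp [hX]
  obtain ⟨hba, hah⟩ := (mem_filter.1 ha).2
  rw [hah] at hba
  obtain ⟨hcard, hfirst⟩ := hsat a h hba
  calc #X ≤ #(matchedTo M' h \ matchedTo M h) := card_le_card fun b hb => by
        obtain ⟨hb1, hb2⟩ := (mem_filter.1 hb).2
        refine mem_sdiff.2 ⟨mem_matchedTo.2 hb2, fun hbM => ?_⟩
        rw [hb2, mem_matchedTo.1 hbM] at hb1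
        exact Better.irrefl _ hb1
    _ ≤ #(matchedTo M h \ matchedTo M' h) :=
        card_sdiff_le_card_sdiff_iff.2 (hcard ▸ hM'.2 h)
    _ ≤ _ := card_le_card fun b hb => by
        obtain ⟨hbM, hbM'⟩ := mem_sdiff.1 hb
        rw [mem_matchedTo] at hbM hbM'
        simpa [hbM] using Better.of_head?_eq (hfirst b (mem_matchedTo.2 hbM)) hbM'

theorem IsMatching.popular_of_saturatedByAdmirers [Fintype H] (hM : I.IsMatching M)
    (hsat : ∀ a h, Better (I.pref a) (some h) (M a) → I.SaturatedByAdmirers M h) :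
    I.Popular M := by
  refine ⟨hM, fun M' hM' hdom => (not_lt.2 ?_) hdom⟩
  rw [card_eq_sum_card_fiberwise (f := M') (t := univ) fun _ _ => mem_coe.2 (mem_univ _),
    card_eq_sum_card_fiberwise (f := M) (t := univ) fun _ _ => mem_coe.2 (mem_univ _)]
  simp only [filter_filter]
  exact sum_le_sum fun o _ => card_better_at_le_card_worse_at hM' hsat o

end HA

namespace ThreeDMFlat

variable {n : ℕ} {D : ThreeDMFlat n}

lemma card_filter_mem (j : Fin (3 * n)) : #(univ.filter fun i => D.Mem i j) = 3 := by
  have h1 := D.partA j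
  have h2 := D.partB j
  have h3 := D.partC j
  have hS : (univ.filter fun i => D.Mem i j) = {(D.S j).1, (D.S j).2.1, (D.S j).2.2} := by
    ext i
    simp [Mem, eq_comm]
  rw [hS, card_eq_three]
  refine ⟨_, _, _, ?_, ?_, ?_, rfl⟩ <;> rw [Ne, Fin.ext_iff] <;> omega

lemma sum_card_filter_mem (P : Finset (Fin (3 * n))) :
    ∑ i, #(P.filter fun j => D.Mem i j) = 3 * #P := by
  simp only [card_filter]
  rw [sum_comm]
  simp only [← card_filter, card_filter_mem, sum_const, smul_eq_mul, mul_comm]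

lemma ExactCover.card_eq {J : Finset (Fin (3 * n))} (hJ : D.ExactCover J) : #J = n := by
  have := sum_card_filter_mem (D := D) J
  simp only [show ∀ i, #(J.filter fun j => D.Mem i j) = 1 from hJ, sum_const, card_univ,
    Fintype.card_fin, smul_eq_mul, mul_one] at this
  omega

lemma exactCover_of_card_filter_mem_le_one {P : Finset (Fin (3 * n))}
    (hle : ∀ i, #(P.filter fun j => D.Mem i j) ≤ 1) (hP : n ≤ #P) : D.ExactCover P := by
  intro i
  by_contra hi
  have hsum : ∑ i, #(P.filter fun j => D.Mem i j) < ∑ _i : Fin (3 * n), 1 :=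
    sum_lt_sum (fun i _ => hle i) ⟨i, mem_univ _, lt_of_le_of_ne (hle i) hi⟩
  simp only [sum_card_filter_mem, sum_const, card_univ, Fintype.card_fin, smul_eq_mul,
    mul_one] at hsum
  omega

end ThreeDMFlat

namespace Inst15

variable {n : ℕ}

-- Indices are 0-based: `appS j 3` is `s_j^4` and `appQ j 0` is `q_j^1`.
abbrev appE (i : Fin (3 * n)) (k : Fin 2) : Appl15 n := Sum.inl (i, k)
abbrev appS (j : Fin (3 * n)) (ℓ : Fin 4) : Appl15 n := Sum.inr (Sum.inl (j, ℓ))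
abbrev appA (j : Fin (3 * n)) : Appl15 n := Sum.inr (Sum.inr (Sum.inl j))
abbrev appP (j : Fin (3 * n)) : Appl15 n := Sum.inr (Sum.inr (Sum.inr (Sum.inl j)))
abbrev appQ (j : Fin (3 * n)) (k : Fin 3) : Appl15 n :=
  Sum.inr (Sum.inr (Sum.inr (Sum.inr (j, k))))

lemma exists_elem15_eq {D : ThreeDMFlat n} {i j : Fin (3 * n)} (h : D.Mem i j) :
    ∃ ℓ ≠ 3, elem15 D j ℓ = i := by
  rcases h with h | h | h
  exacts [⟨0, by decide, by simp [elem15, h]⟩, ⟨1, by decide, by simp [elem15, h]⟩,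
    ⟨2, by decide, by simp [elem15, h]⟩]

lemma elem15_mem (D : ThreeDMFlat n) (j : Fin (3 * n)) (ℓ : Fin 4) :
    D.Mem (elem15 D j ℓ) j := by
  unfold elem15 ThreeDMFlat.Mem
  split_ifs <;> simp

lemma elem15_injOn {D : ThreeDMFlat n} {j : Fin (3 * n)} {ℓ ℓ' : Fin 4} (hℓ : ℓ ≠ 3)
    (hℓ' : ℓ' ≠ 3) (h : elem15 D j ℓ = elem15 D j ℓ') : ℓ = ℓ' := by
  have h1 := D.partA j
  have h2 := D.partB j
  have h3 := D.partC j
  rw [Fin.ext_iff] at h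
  fin_cases ℓ <;> fin_cases ℓ' <;> simp_all [elem15] <;> omega

@[simp] lemma inst15_cap (D : ThreeDMFlat n) (c : House15 n → ℕ) : (inst15 D c).cap = c := rfl

@[simp] lemma cap15_he (i : Fin (3 * n)) : cap15 (he15 i) = 1 := rfl
@[simp] lemma cap15_ht (j : Fin (3 * n)) : cap15 (ht15 j) = 4 := rfl
@[simp] lemma cap15_hp (j : Fin (3 * n)) : cap15 (hp15 j) = 1 := rfl
@[simp] lemma cap15_hq (j : Fin (3 * n)) : cap15 (hq15 j) = 1 := rfl
@[simp] lemma cap15_hx : cap15 (hx15 : House15 n) = 2 * n - 2 := rfl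

@[simp] lemma inst15_pref_appS (D : ThreeDMFlat n) (c : House15 n → ℕ) (j : Fin (3 * n))
    (ℓ : Fin 4) : (inst15 D c).pref (appS j ℓ) = [he15 (elem15 D j ℓ), hp15 j, ht15 j] := rfl
@[simp] lemma inst15_pref_appA (D : ThreeDMFlat n) (c : House15 n → ℕ) (j : Fin (3 * n)) :
    (inst15 D c).pref (appA j) = [hq15 j, hp15 j, hx15] := rfl

lemma forall_house15 {P : House15 n → Prop} : (∀ h, P h) ↔
    (∀ i, P (he15 i)) ∧ (∀ j, P (ht15 j)) ∧ (∀ j, P (hp15 j)) ∧ (∀ j, P (hq15 j)) ∧ P hx15 :=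
  ⟨fun h => ⟨fun _ => h _, fun _ => h _, fun _ => h _, fun _ => h _, h _⟩,
    fun ⟨he, ht, hp, hq, hx⟩ h => by
      rcases h with i | j | j | j | ⟨⟩
      exacts [he i, ht j, hp j, hq j, hx]⟩

section Cover

variable (D : ThreeDMFlat n) (J : Finset (Fin (3 * n)))

def coverIncrease : House15 n → ℕ
  | Sum.inl _ => 2
  | Sum.inr (Sum.inl _) => 0
  | Sum.inr (Sum.inr (Sum.inl j)) => if j ∈ J then 2 else 0
  | Sum.inr (Sum.inr (Sum.inr (Sum.inl _))) => 2
  | Sum.inr (Sum.inr (Sum.inr (Sum.inr _))) => 2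

def coverAssignment : Appl15 n → House15 n
  | Sum.inl (i, _) => he15 i
  | Sum.inr (Sum.inl (j, ℓ)) =>
      if j ∉ J then ht15 j else if ℓ = 3 then hp15 j else he15 (elem15 D j ℓ)
  | Sum.inr (Sum.inr (Sum.inl j)) => if j ∈ J then hp15 j else hx15
  | Sum.inr (Sum.inr (Sum.inr (Sum.inl j))) => hp15 j
  | Sum.inr (Sum.inr (Sum.inr (Sum.inr (j, _)))) => hq15 j


lemma matchedTo_he (hJ : D.ExactCover J) (i : Fin (3 * n)) :
    ∃ j ℓ, elem15 D j ℓ = i ∧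
      HA.matchedTo (fun a => some (coverAssignment D J a)) (he15 i) =
        insert (appS j ℓ) (univ.image (appE i)) := by
  obtain ⟨j, hj⟩ := card_eq_one.1 (hJ i)
  have hjJ : j ∈ J ∧ D.Mem i j := mem_filter.1 (hj ▸ mem_singleton_self j)
  obtain ⟨ℓ, hℓ3, hℓ⟩ := exists_elem15_eq hjJ.2
  have huniq : ∀ j' ℓ', j' ∈ J → ℓ' ≠ 3 → elem15 D j' ℓ' = i → j' = j ∧ ℓ' = ℓ := by
    intro j' ℓ' hj' hℓ' he
    have : j' = j := mem_singleton.1 (hj ▸ mem_filter.2 ⟨hj', he ▸ elem15_mem D j' ℓ'⟩)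
    subst this
    exact ⟨rfl, elem15_injOn hℓ' hℓ3 (he.trans hℓ.symm)⟩
  refine ⟨j, ℓ, hℓ, ?_⟩
  ext b
  rcases b with ⟨i', k⟩ | ⟨⟨j', ℓ'⟩ | j' | j' | ⟨j', k⟩⟩ <;>
    simp only [HA.mem_matchedTo, coverAssignment] <;> (try split_ifs) <;>
    simp [he15, hp15, ht15, hq15, hx15] <;> grind

lemma matchedTo_hq (j : Fin (3 * n)) :
    HA.matchedTo (fun a => some (coverAssignment D J a)) (hq15 j) = univ.image (appQ j) := by
  ext b
  rcases b with ⟨i', k⟩ | ⟨⟨j', ℓ'⟩ | j' | j' | ⟨j', k⟩⟩ <;>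
    simp only [HA.mem_matchedTo, coverAssignment] <;> (try split_ifs) <;>
    simp [he15, hp15, ht15, hq15, hx15, eq_comm]

lemma matchedTo_hp_of_mem {j : Fin (3 * n)} (hj : j ∈ J) :
    HA.matchedTo (fun a => some (coverAssignment D J a)) (hp15 j) = {appS j 3, appA j, appP j} := by
  ext b
  rcases b with ⟨i', k⟩ | ⟨⟨j', ℓ'⟩ | j' | j' | ⟨j', k⟩⟩ <;>
    simp only [HA.mem_matchedTo, coverAssignment] <;> (try split_ifs) <;>
    simp [he15, hp15, ht15, hq15, hx15] <;> grind

lemma matchedTo_hp_of_not_mem {j : Fin (3 * n)} (hj : j ∉ J) :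
    HA.matchedTo (fun a => some (coverAssignment D J a)) (hp15 j) = {appP j} := by
  ext b
  rcases b with ⟨i', k⟩ | ⟨⟨j', ℓ'⟩ | j' | j' | ⟨j', k⟩⟩ <;>
    simp only [HA.mem_matchedTo, coverAssignment] <;> (try split_ifs) <;>
    simp [he15, hp15, ht15, hq15, hx15] <;> grind

lemma matchedTo_ht_subset (j : Fin (3 * n)) :
    HA.matchedTo (fun a => some (coverAssignment D J a)) (ht15 j) ⊆ univ.image (appS j) := by
  intro b
  rcases b with ⟨i', k⟩ | ⟨⟨j', ℓ'⟩ | j' | j' | ⟨j', k⟩⟩ <;>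
    simp only [HA.mem_matchedTo, coverAssignment] <;> (try split_ifs) <;>
    simp [he15, hp15, ht15, hq15, hx15, eq_comm]

lemma matchedTo_hx :
    HA.matchedTo (fun a => some (coverAssignment D J a)) hx15 = Jᶜ.image appA := by
  ext b
  rcases b with ⟨i', k⟩ | ⟨⟨j', ℓ'⟩ | j' | j' | ⟨j', k⟩⟩ <;>
    simp only [HA.mem_matchedTo, coverAssignment] <;> (try split_ifs) <;>
    simp [he15, hp15, ht15, hq15, hx15] <;> grind

@[simp] lemma coverIncrease_he (i : Fin (3 * n)) : coverIncrease J (he15 i) = 2 := rfl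
@[simp] lemma coverIncrease_ht (j : Fin (3 * n)) : coverIncrease J (ht15 j) = 0 := rfl
@[simp] lemma coverIncrease_hp (j : Fin (3 * n)) :
    coverIncrease J (hp15 j) = if j ∈ J then 2 else 0 := rfl
@[simp] lemma coverIncrease_hq (j : Fin (3 * n)) : coverIncrease J (hq15 j) = 2 := rfl
@[simp] lemma coverIncrease_hx : coverIncrease J (hx15 : House15 n) = 2 := rfl

lemma coverIncrease_le_two : ∀ h : House15 n, coverIncrease J h ≤ 2 :=
  forall_house15.2 ⟨by simp, by simp, fun j => by simp; split_ifs <;> omega, by simp, by simp⟩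

lemma coverAssignment_mem_pref (c : House15 n → ℕ) (a : Appl15 n) :
    coverAssignment D J a ∈ (inst15 D c).pref a := by
  rcases a with ⟨i', k⟩ | ⟨⟨j', ℓ'⟩ | j' | j' | ⟨j', k⟩⟩ <;>
    simp only [coverAssignment, inst15] <;> (try split_ifs) <;> simp

lemma isMatching_cover (hJ : D.ExactCover J) :
    (inst15 D fun h => cap15 h + coverIncrease J h).IsMatching
      fun a => some (coverAssignment D J a) := by
  refine HA.isMatching_iff.2 ⟨fun a h ha => Option.some_injective _ ha ▸
    coverAssignment_mem_pref D J _ a, forall_house15.2 ⟨fun i => ?_, fun j => ?_, fun j => ?_,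
    fun j => ?_, ?_⟩⟩ <;>
    simp only [inst15_cap, cap15_he, cap15_ht, cap15_hp, cap15_hq, cap15_hx, coverIncrease_he,
      coverIncrease_ht, coverIncrease_hp, coverIncrease_hq, coverIncrease_hx]
  · obtain ⟨j, ℓ, -, hM⟩ := matchedTo_he D J hJ i
    rw [hM]
    exact (card_insert_le _ _).trans (Nat.succ_le_succ (card_image_le.trans (by simp)))
  · exact (card_le_card (matchedTo_ht_subset D J j)).trans card_image_le
  · by_cases hj : j ∈ J
    · simp [matchedTo_hp_of_mem D J hj, hj]
    · simp [matchedTo_hp_of_not_mem D J hj, hj]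
  · rw [matchedTo_hq D J j]
    exact card_image_le.trans (by simp)
  · rw [matchedTo_hx D J, card_image_of_injective _ (fun _ _ h => by simpa using h), card_compl,
      Fintype.card_fin, hJ.card_eq]
    omega

lemma not_better_ht (a : Appl15 n) (j : Fin (3 * n)) (c : House15 n → ℕ) :
    ¬ Better ((inst15 D c).pref a) (some (ht15 j)) (some (coverAssignment D J a)) := by
  rcases a with ⟨i', k⟩ | ⟨⟨j', ℓ'⟩ | j' | j' | ⟨j', k⟩⟩ <;>
    simp only [coverAssignment, inst15] <;> (try split_ifs) <;>
    simp [Better, he15, hp15, ht15, hq15, hx15]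

lemma not_better_hx (a : Appl15 n) (c : House15 n → ℕ) :
    ¬ Better ((inst15 D c).pref a) (some hx15) (some (coverAssignment D J a)) := by
  rcases a with ⟨i', k⟩ | ⟨⟨j', ℓ'⟩ | j' | j' | ⟨j', k⟩⟩ <;>
    simp only [coverAssignment, inst15] <;> (try split_ifs) <;>
    simp [Better, he15, hp15, ht15, hq15, hx15]

lemma not_mem_of_better_hp {a : Appl15 n} {j : Fin (3 * n)} {c : House15 n → ℕ}
    (hb : Better ((inst15 D c).pref a) (some (hp15 j)) (some (coverAssignment D J a))) :
    j ∉ J := by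
  rcases a with ⟨i', k⟩ | ⟨⟨j', ℓ'⟩ | j' | j' | ⟨j', k⟩⟩ <;>
    simp only [coverAssignment, inst15] at hb <;> (try split_ifs at hb) <;>
    simp_all [Better, he15, hp15, ht15, hq15, hx15]

lemma saturatedByAdmirers_he (hJ : D.ExactCover J) (i : Fin (3 * n)) :
    (inst15 D fun h => cap15 h + coverIncrease J h).SaturatedByAdmirers
      (fun a => some (coverAssignment D J a)) (he15 i) := by
  obtain ⟨j, ℓ, hℓ, hM⟩ := matchedTo_he D J hJ i
  rw [HA.SaturatedByAdmirers, hM, card_insert_of_notMem (by simp),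
    card_image_of_injective _ (fun _ _ h => by simpa using h)]
  simp [HA.fOpt, inst15, hℓ]

lemma saturatedByAdmirers_hq (j : Fin (3 * n)) :
    (inst15 D fun h => cap15 h + coverIncrease J h).SaturatedByAdmirers
      (fun a => some (coverAssignment D J a)) (hq15 j) := by
  rw [HA.SaturatedByAdmirers, matchedTo_hq,
    card_image_of_injective _ (fun _ _ h => by simpa using h)]
  simp [HA.fOpt, inst15]

lemma saturatedByAdmirers_hp {j : Fin (3 * n)} (hj : j ∉ J) :
    (inst15 D fun h => cap15 h + coverIncrease J h).SaturatedByAdmirers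
      (fun a => some (coverAssignment D J a)) (hp15 j) := by
  rw [HA.SaturatedByAdmirers, matchedTo_hp_of_not_mem D J hj]
  simp [HA.fOpt, inst15, hj]

theorem exists_perfect_popular_of_exactCover (hJ : D.ExactCover J) :
    ∃ r : House15 n → ℕ, (∀ h, r h ≤ 2) ∧
      ∃ M, HA.Perfect M ∧ (inst15 D fun h => cap15 h + r h).Popular M :=
  ⟨coverIncrease J, coverIncrease_le_two J, _, fun _ => rfl,
    (isMatching_cover D J hJ).popular_of_saturatedByAdmirers fun a => forall_house15.2
      ⟨fun i _ => saturatedByAdmirers_he D J hJ i, fun j hb => (not_better_ht D J a j _ hb).elim,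
        fun _ hb => saturatedByAdmirers_hp D J (not_mem_of_better_hp D J hb),
        fun j _ => saturatedByAdmirers_hq D J j, fun hb => (not_better_hx D J a _ hb).elim⟩⟩

end Cover

section Forward

variable {D : ThreeDMFlat n} {r : House15 n → ℕ} {M : Appl15 n → Option (House15 n)}

lemma card_le_three_of_cap15 (hr : ∀ h, r h ≤ 2)
    (hM : (inst15 D fun h => cap15 h + r h).IsMatching M) {h : House15 n} (hh : cap15 h = 1)
    {s : Finset (Appl15 n)} (hs : ∀ a ∈ s, M a = some h) : #s ≤ 3 := by
  have hcap := hM.card_le_cap hs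
  simp only [inst15_cap, hh] at hcap
  linarith [hr h]

lemma eq_appE (hM : (inst15 D fun h => cap15 h + r h).IsMatching M) (hPerf : HA.Perfect M)
    (i : Fin (3 * n)) (k : Fin 2) : M (appE i k) = some (he15 i) :=
  hM.eq_some_of_pref_eq_singleton (hPerf _) rfl

lemma eq_appP (hM : (inst15 D fun h => cap15 h + r h).IsMatching M) (hPerf : HA.Perfect M)
    (j : Fin (3 * n)) : M (appP j) = some (hp15 j) :=
  hM.eq_some_of_pref_eq_singleton (hPerf _) rfl

lemma eq_appQ (hM : (inst15 D fun h => cap15 h + r h).IsMatching M) (hPerf : HA.Perfect M)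
    (j : Fin (3 * n)) (k : Fin 3) : M (appQ j k) = some (hq15 j) :=
  hM.eq_some_of_pref_eq_singleton (hPerf _) rfl

lemma appA_eq_hp_or_hx (hr : ∀ h, r h ≤ 2) (hM : (inst15 D fun h => cap15 h + r h).IsMatching M)
    (hPerf : HA.Perfect M) (j : Fin (3 * n)) :
    M (appA j) = some (hp15 j) ∨ M (appA j) = some hx15 := by
  obtain ⟨h, hh, hA⟩ := hM.exists_mem_pref (hPerf (appA j))
  simp only [inst15_pref_appA, List.mem_cons, List.not_mem_nil, or_false] at hh
  rcases hh with rfl | rfl | rfl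
  · have := card_le_three_of_cap15 hr hM (cap15_hq j)
      (s := insert (appA j) (univ.image (appQ j))) (by simp [hA, eq_appQ hM hPerf])
    rw [card_insert_of_notMem (by simp),
      card_image_of_injective _ (fun _ _ h => by simpa using h)] at this
    simp at this
  · exact Or.inl hA
  · exact Or.inr hA

/-- If `s_j^ℓ` sat at `t_j`, moving it up to `p_j` and `a_j` up to `q_j` would make two applicants
better off and only `q_j^1` worse off. -/
lemma appS_ne_ht (hPop : (inst15 D fun h => cap15 h + r h).Popular M) (hPerf : HA.Perfect M)
    {j : Fin (3 * n)} (hA : M (appA j) = some (hp15 j)) (ℓ : Fin 4) :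
    M (appS j ℓ) ≠ some (ht15 j) := by
  intro hS
  have hQ := eq_appQ hPop.1 hPerf j 0
  have hM₁ := hPop.1.update_reassign (b := appS j ℓ) hA (by simp)
  have hM₂ := hM₁.update_reassign (a := appQ j 0) (b := appA j) (h := hq15 j)
    (by simp [hQ]) (by simp)
  refine hPop.2 _ hM₂
    (HA.dominates_of_two_improvers (a := appS j ℓ) (b := appA j) (c := appQ j 0) (by simp) ?_ ?_ ?_)
  · simp [hS, Better, he15, hp15, ht15]
  · simp [hA, Better, hq15, hp15, hx15]
  · intro d h1 h2 h3
    simp [h1, h2, h3]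

lemma appS_eq_of_appA_eq_hp (hPop : (inst15 D fun h => cap15 h + r h).Popular M)
    (hPerf : HA.Perfect M) {j : Fin (3 * n)} (hA : M (appA j) = some (hp15 j)) (ℓ : Fin 4) :
    M (appS j ℓ) = some (he15 (elem15 D j ℓ)) ∨ M (appS j ℓ) = some (hp15 j) := by
  obtain ⟨h, hh, hS⟩ := hPop.1.exists_mem_pref (hPerf (appS j ℓ))
  simp only [inst15_pref_appS, List.mem_cons, List.not_mem_nil, or_false] at hh
  rcases hh with rfl | rfl | rfl
  exacts [Or.inl hS, Or.inr hS, absurd hS (appS_ne_ht hPop hPerf hA ℓ)]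

lemma eq_of_appS_eq_hp (hr : ∀ h, r h ≤ 2) (hM : (inst15 D fun h => cap15 h + r h).IsMatching M)
    (hPerf : HA.Perfect M) {j : Fin (3 * n)} (hA : M (appA j) = some (hp15 j)) {ℓ ℓ' : Fin 4}
    (hS : M (appS j ℓ) = some (hp15 j)) (hS' : M (appS j ℓ') = some (hp15 j)) : ℓ = ℓ' := by
  by_contra hne
  have := card_le_three_of_cap15 hr hM (cap15_hp j)
    (s := {appS j ℓ, appS j ℓ', appA j, appP j}) (by simp [hS, hS', hA, eq_appP hM hPerf])
  rw [card_insert_of_notMem (by simp [hne]), card_insert_of_notMem (by simp),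
    card_pair (by simp)] at this
  omega

lemma eq_of_appS_eq_he (hr : ∀ h, r h ≤ 2) (hM : (inst15 D fun h => cap15 h + r h).IsMatching M)
    (hPerf : HA.Perfect M) {i j j' : Fin (3 * n)} {ℓ ℓ' : Fin 4}
    (hS : M (appS j ℓ) = some (he15 i)) (hS' : M (appS j' ℓ') = some (he15 i)) :
    j = j' ∧ ℓ = ℓ' := by
  by_contra hne
  have := card_le_three_of_cap15 hr hM (cap15_he i)
    (s := {appS j ℓ, appS j' ℓ', appE i 0, appE i 1}) (by simp [hS, hS', eq_appE hM hPerf])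
  rw [card_insert_of_notMem (by simpa using hne), card_insert_of_notMem (by simp),
    card_pair (by simp)] at this
  omega

/-- Of `s_j^3, s_j^4`, which share their first choice, one must sit at `p_j`, and then all the
others sit at their first choices. -/
lemma exists_appS_eq_he (hr : ∀ h, r h ≤ 2)
    (hPop : (inst15 D fun h => cap15 h + r h).Popular M) (hPerf : HA.Perfect M)
    {i j : Fin (3 * n)} (hA : M (appA j) = some (hp15 j)) (hi : D.Mem i j) :
    ∃ ℓ, M (appS j ℓ) = some (he15 i) := by
  have h23 : elem15 D j 2 = elem15 D j 3 := rfl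
  obtain ⟨ℓp, hℓp, hp⟩ : ∃ ℓp : Fin 4, (ℓp = 2 ∨ ℓp = 3) ∧ M (appS j ℓp) = some (hp15 j) := by
    rcases appS_eq_of_appA_eq_hp hPop hPerf hA 2 with h2 | h2
    · rcases appS_eq_of_appA_eq_hp hPop hPerf hA 3 with h3 | h3
      · rw [h23] at h2
        exact absurd (eq_of_appS_eq_he hr hPop.1 hPerf h2 h3).2 (by decide)
      · exact ⟨3, Or.inr rfl, h3⟩
    · exact ⟨2, Or.inl rfl, h2⟩
  have hE : ∀ ℓ ≠ ℓp, M (appS j ℓ) = some (he15 (elem15 D j ℓ)) := fun ℓ hℓ =>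
    (appS_eq_of_appA_eq_hp hPop hPerf hA ℓ).resolve_right fun h =>
      hℓ (eq_of_appS_eq_hp hr hPop.1 hPerf hA h hp)
  obtain ⟨ℓ, hℓ3, rfl⟩ := exists_elem15_eq hi
  by_cases hℓ : ℓ = ℓp
  · subst hℓ
    obtain rfl : ℓ = 2 := hℓp.resolve_right hℓ3
    exact ⟨3, h23 ▸ hE 3 (by decide)⟩
  · exact ⟨ℓ, hE ℓ hℓ⟩

lemma le_card_filter_appA_eq_hp (hr : ∀ h, r h ≤ 2)
    (hM : (inst15 D fun h => cap15 h + r h).IsMatching M) (hPerf : HA.Perfect M) :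
    n ≤ #(univ.filter fun j => M (appA j) = some (hp15 j)) := by
  set P := univ.filter fun j => M (appA j) = some (hp15 j)
  have hx := hM.card_le_cap (h := hx15) (s := Pᶜ.image appA) (by
    simp only [mem_image, mem_compl, forall_exists_index, and_imp, forall_apply_eq_imp_iff₂]
    exact fun j hj => (appA_eq_hp_or_hx hr hM hPerf j).resolve_left (by simpa [P] using hj))
  rw [card_image_of_injective _ (fun _ _ h => by simpa using h), card_compl, Fintype.card_fin,
    inst15_cap, cap15_hx] at hx
  have := hr hx15
  have := card_le_univ P
  rw [Fintype.card_fin] at this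
  omega

theorem exists_exactCover_of_perfect_popular (hr : ∀ h, r h ≤ 2)
    (hPop : (inst15 D fun h => cap15 h + r h).Popular M) (hPerf : HA.Perfect M) :
    ∃ J, D.ExactCover J := by
  refine ⟨_, D.exactCover_of_card_filter_mem_le_one (fun i => card_le_one.2 fun j hj j' hj' => ?_)
    (le_card_filter_appA_eq_hp hr hPop.1 hPerf)⟩
  simp only [mem_filter, mem_univ, true_and] at hj hj'
  obtain ⟨ℓ, hℓ⟩ := exists_appS_eq_he hr hPop hPerf hj.1 hj.2
  obtain ⟨ℓ', hℓ'⟩ := exists_appS_eq_he hr hPop hPerf hj'.1 hj'.2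
  exact (eq_of_appS_eq_he hr hPop.1 hPerf hℓ hℓ').1

end Forward
end Inst15

/-- there is a capacity increase vector `r ≥ 0` with `|r|_∞ ≤ 2` such that
the instance with capacities `q + r` admits a perfect popular matching iff the 3DM
instance admits an exact 3-cover. -/
theorem minMax_increase_iff_exactCover (n : ℕ) (D : ThreeDMFlat n) :
    (∃ r : House15 n → ℕ, (∀ h, r h ≤ 2) ∧
        ∃ M, HA.Perfect M ∧ (inst15 D fun h => cap15 h + r h).Popular M) ↔
      (∃ J, D.ExactCover J) :=
  ⟨fun ⟨_, hr, _, hPerf, hPop⟩ => Inst15.exists_exactCover_of_perfect_popular hr hPop hPerf,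
    fun ⟨J, hJ⟩ => Inst15.exists_perfect_popular_of_exactCover D J hJ⟩
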